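/- arXiv:1312.7293 — 5 statements merged into one kernel-verified Lean document; each statement's English description precedes it below -/
import Mathlib

section
/- Let a > 0 and B > 0 with a*B > 1, and define g : (0, B) → ℝ by g(k) = 2*a*k + log(B - k) - log(B + k). Then g(k) tends to -∞ as k tends to B from the left, and g has exactly one zero in the open interval (0, B). -/
/-!
We have `g 0 = 0`, `g' k = 2a - 2B / (B² - k²)` and `g' 0 = 2(a - 1/B) > 0` because `aB > 1`.
Since `g'` strictly decreases on `[0, B)`, `g` is strictly concave there, so it takes the
value `g 0 = 0` at most once more to the right of `0`. As `log (B - k) → -∞` for `k → B⁻`,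
`g` is positive just after `0` and negative just before `B`, and the intermediate value
theorem produces the zero.
-/

open Real Filter Set Topology

theorem StrictConcaveOn.eq_of_apply_eq_of_lt {f : ℝ → ℝ} {s : Set ℝ}
    (hf : StrictConcaveOn ℝ s f) {x₀ x y : ℝ} (hx₀ : x₀ ∈ s) (hx : x ∈ s) (hy : y ∈ s)
    (hx₀x : x₀ < x) (hx₀y : x₀ < y) (hfx : f x = f x₀) (hfy : f y = f x₀) : x = y := by
  have h_absurd : ∀ {u v}, v ∈ s → x₀ < u → u < v → f u = f x₀ → f v = f x₀ → False := by
    intro u v hv hu huv hfu hfv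
    have hmid := hf.lt_on_openSegment hx₀ hv (hu.trans huv).ne
      (by rw [openSegment_eq_Ioo (hu.trans huv)]; exact ⟨hu, huv⟩)
    rw [hfv, hfu, min_self] at hmid
    exact hmid.false
  rcases lt_trichotomy x y with hxy | hxy | hxy
  · exact (h_absurd hy hx₀x hxy hfx hfy).elim
  · exact hxy
  · exact (h_absurd hx hx₀y hxy hfy hfx).elim

theorem exists_mem_Ioo_eq_zero_of_hasDerivAt_pos_of_tendsto_atBot {f : ℝ → ℝ} {a b f' : ℝ}
    (hab : a < b) (hf : ContinuousOn f (Ioo a b)) (hfa : f a = 0) (hf' : HasDerivAt f f' a)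
    (hf'_pos : 0 < f') (hfb : Tendsto f (𝓝[<] b) atBot) : ∃ x ∈ Ioo a b, f x = 0 := by
  have h_sign := eventually_nhdsWithin_sign_eq_of_deriv_pos (hf'.deriv ▸ hf'_pos) hfa
  obtain ⟨p, hfp, hp⟩ : ∃ p, 0 < f p ∧ p ∈ Ioo a b := by
    refine Eventually.exists (f := 𝓝[>] a) ?_
    filter_upwards [nhdsWithin_le_nhds h_sign, Ioo_mem_nhdsGT hab, self_mem_nhdsWithin]
      with x hsign hx (hax : a < x)
    rw [sign_pos (sub_pos.2 hax), sign_eq_one_iff] at hsign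
    exact ⟨hsign, hx⟩
  obtain ⟨q, hfq, hq⟩ : ∃ q, f q < 0 ∧ q ∈ Ioo p b := by
    refine Eventually.exists (f := 𝓝[<] b) ?_
    filter_upwards [hfb.eventually (eventually_lt_atBot 0), Ioo_mem_nhdsLT hp.2] with x hfx hx
    exact ⟨hfx, hx⟩
  have hpq_sub : Icc p q ⊆ Ioo a b := Icc_subset_Ioo hp.1 hq.2
  obtain ⟨x, hx, hfx⟩ := intermediate_value_Ioo' hq.1.le (hf.mono hpq_sub) ⟨hfq, hfp⟩
  exact ⟨x, hpq_sub (Ioo_subset_Icc_self hx), hfx⟩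

noncomputable def robinG (a B k : ℝ) : ℝ := 2 * a * k + log (B - k) - log (B + k)

namespace robinG

variable {a B : ℝ}

theorem apply_zero : robinG a B 0 = 0 := by simp [robinG]

theorem hasDerivAt {x : ℝ} (hx : x ∈ Ioo (-B) B) :
    HasDerivAt (robinG a B) (2 * a - 2 * B / (B ^ 2 - x ^ 2)) x := by
  have hBx : B - x ≠ 0 := by linarith [hx.2]
  have hBx' : B + x ≠ 0 := by linarith [hx.1]
  have h := (((hasDerivAt_id x).const_mul (2 * a)).add
    (((hasDerivAt_id x).const_sub B).log hBx)).sub (((hasDerivAt_id x).const_add B).log hBx')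
  refine HasDerivAt.congr_deriv (f := robinG a B) h ?_
  rw [show B ^ 2 - x ^ 2 = (B - x) * (B + x) by ring, id]
  field_simp
  ring

theorem continuousOn : ContinuousOn (robinG a B) (Ioo (-B) B) :=
  fun _ hx ↦ (hasDerivAt hx).continuousAt.continuousWithinAt

theorem strictConcaveOn : StrictConcaveOn ℝ (Ico 0 B) (robinG a B) := by
  have h_sub : Ico 0 B ⊆ Ioo (-B) B := fun x hx ↦ ⟨by linarith [hx.1, hx.2], hx.2⟩
  refine StrictAntiOn.strictConcaveOn_of_deriv (convex_Ico 0 B) (continuousOn.mono h_sub) ?_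
  rw [interior_Ico]
  intro x hx y hy hxy
  rw [(hasDerivAt (h_sub (Ioo_subset_Ico_self hx))).deriv,
    (hasDerivAt (h_sub (Ioo_subset_Ico_self hy))).deriv]
  have hy_pos : 0 < B ^ 2 - y ^ 2 := by nlinarith [hy.1, hy.2]
  have h_lt : B ^ 2 - y ^ 2 < B ^ 2 - x ^ 2 := by nlinarith [hx.1]
  have := div_lt_div_of_pos_left (by linarith [hx.1, hx.2] : 0 < 2 * B) hy_pos h_lt
  linarith

theorem tendsto_nhdsLT (hB : B ≠ 0) : Tendsto (robinG a B) (𝓝[<] B) atBot := by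
  have h_log : Tendsto (fun k ↦ log (B - k)) (𝓝[<] B) atBot := by
    refine tendsto_log_nhdsGT_zero.comp (tendsto_nhdsWithin_iff.2 ⟨?_, ?_⟩)
    · simpa using ((continuous_sub_left B).tendsto B).mono_left nhdsWithin_le_nhds
    · filter_upwards [self_mem_nhdsWithin] with k (hk : k < B)
      exact sub_pos.2 hk
  have h_rest : Tendsto (fun k ↦ 2 * a * k - log (B + k)) (𝓝[<] B)
      (𝓝 (2 * a * B - log (B + B))) :=
    ((continuousAt_const.mul continuousAt_id).sub
      ((continuousAt_const.add continuousAt_id).log (by simpa using hB))).tendsto.mono_left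
      nhdsWithin_le_nhds
  exact (h_rest.add_atBot h_log).congr fun k ↦ by simp only [robinG]; ring

end robinG

theorem robin_g_unique_zero_general (a B : ℝ) (hB : 0 < B) (hab : 1 < a * B)
    (g : ℝ → ℝ)
    (hg : ∀ k, g k = 2 * a * k + Real.log (B - k) - Real.log (B + k)) :
    Filter.Tendsto g (nhdsWithin B (Set.Iio B)) Filter.atBot ∧
    (∃! k : ℝ, k ∈ Set.Ioo 0 B ∧ g k = 0) := by
  obtain rfl : g = robinG a B := funext hg
  have h_zero : (0 : ℝ) ∈ Ioo (-B) B := ⟨neg_neg_iff_pos.2 hB, hB⟩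
  have h_deriv_pos : 0 < 2 * a - 2 * B / (B ^ 2 - 0 ^ 2) := by
    rw [sub_pos, div_lt_iff₀ (by simpa using pow_pos hB 2)]
    nlinarith
  have h_tendsto := robinG.tendsto_nhdsLT (a := a) hB.ne'
  obtain ⟨k, hk, hgk⟩ := exists_mem_Ioo_eq_zero_of_hasDerivAt_pos_of_tendsto_atBot hB
    (robinG.continuousOn.mono (Ioo_subset_Ioo_left (by linarith))) robinG.apply_zero
    (robinG.hasDerivAt h_zero) h_deriv_pos h_tendsto
  refine ⟨h_tendsto, k, ⟨hk, hgk⟩, fun k' ⟨hk', hgk'⟩ ↦ ?_⟩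
  exact robinG.strictConcaveOn.eq_of_apply_eq_of_lt (left_mem_Ico.2 hB)
    (Ioo_subset_Ico_self hk') (Ioo_subset_Ico_self hk) hk'.1 hk.1
    (hgk'.trans robinG.apply_zero.symm) (hgk.trans robinG.apply_zero.symm)

theorem robin_g_unique_zero (a B : ℝ) (ha : 0 < a) (hB : 0 < B) (hab : 1 < a * B)
    (g : ℝ → ℝ)
    (hg : ∀ k, g k = 2 * a * k + Real.log (B - k) - Real.log (B + k)) :
    Filter.Tendsto g (nhdsWithin B (Set.Iio B)) Filter.atBot ∧
    (∃! k : ℝ, k ∈ Set.Ioo 0 B ∧ g k = 0) :=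
  robin_g_unique_zero_general a B hB hab g hg
end

section
/- Let a > 0 and B > 0 with a*B > 4/3. If k ∈ (0, B) satisfies 2*a*k + log(B - k) - log(B + k) = 0, then B - 2*B*exp(-a*B) ≤ k ≤ B. In particular, writing s = B - k, one has 0 ≤ s ≤ 2*B*exp(-a*B). -/
lemma aux_artanh (x : ℝ) (hx : 0 < x) (hx2 : x ≤ 1/2) :
    1 + x ≤ (1 - x) * Real.exp (8 * x / 3) := by
  have hy0 : (0:ℝ) ≤ 8 * x / 3 := by positivity
  have h1 : (1 + (8 * x / 3) / 3) ^ 3 ≤ Real.exp (8 * x / 3) := by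
    have hb : 1 + (8 * x / 3) / 3 ≤ Real.exp ((8 * x / 3) / 3) := by
      linarith [Real.add_one_le_exp ((8 * x / 3) / 3)]
    calc (1 + (8 * x / 3) / 3) ^ 3 ≤ (Real.exp ((8 * x / 3) / 3)) ^ 3 := by
          apply pow_le_pow_left₀ (by linarith) hb
      _ = Real.exp (8 * x / 3) := by
          rw [← Real.exp_nat_mul]; push_cast; ring_nf
  nlinarith [h1, mul_pos hx (sub_pos.mpr (lt_of_le_of_lt hx2 (by norm_num : (1:ℝ)/2 < 1))),
    mul_nonneg hx.le (sub_nonneg.mpr hx2), sq_nonneg x, sq_nonneg (x - 1/2),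
    mul_nonneg (mul_nonneg hx.le hx.le) (sub_nonneg.mpr hx2),
    mul_nonneg (mul_nonneg (mul_nonneg hx.le hx.le) hx.le) (sub_nonneg.mpr hx2)]

theorem robin_dirichlet_eigenvalue_bound (a B k : ℝ) (ha : 0 < a) (hB : 0 < B)
    (hab : 4 / 3 < a * B) (hk : k ∈ Set.Ioo 0 B)
    (heq : 2 * a * k + Real.log (B - k) - Real.log (B + k) = 0) :
    (B - 2 * B * Real.exp (-a * B) ≤ k ∧ k ≤ B) ∧
    (0 ≤ B - k ∧ B - k ≤ 2 * B * Real.exp (-a * B)) := by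
  obtain ⟨hk0, hkB⟩ := hk
  have hs : 0 < B - k := by linarith
  have hBk : 0 < B + k := by linarith
  -- key identity
  have h1 : B - k = (B + k) * Real.exp (-(2 * a * k)) := by
    have : Real.log (B - k) = Real.log (B + k) + (-(2 * a * k)) := by linarith
    calc B - k = Real.exp (Real.log (B - k)) := (Real.exp_log hs).symm
      _ = Real.exp (Real.log (B + k)) * Real.exp (-(2 * a * k)) := by
          rw [this, Real.exp_add]
      _ = (B + k) * Real.exp (-(2 * a * k)) := by rw [Real.exp_log hBk]
  -- show B/2 < k
  have khalf : B / 2 < k := by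
    by_contra h
    push_neg at h
    have hx : 0 < k / B := by positivity
    have hx2 : k / B ≤ 1 / 2 := by
      rw [div_le_div_iff₀ hB (by norm_num)]; linarith
    have hkey := aux_artanh (k / B) hx hx2
    -- B + k ≤ (B - k) * exp (8k/(3B))
    have h2 : B + k ≤ (B - k) * Real.exp (8 * (k / B) / 3) := by
      have := mul_le_mul_of_nonneg_left hkey hB.le
      have e1 : B * (1 + k / B) = B + k := by field_simp
      have e2 : B * ((1 - k / B) * Real.exp (8 * (k / B) / 3))
          = (B - k) * Real.exp (8 * (k / B) / 3) := by ring_nf; field_simp; ring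
      linarith [e1 ▸ e2 ▸ this]
    -- but B + k = (B - k) * exp (2 a k) with 2 a k > 8k/(3B)
    have h3 : (B + k) = (B - k) * Real.exp (2 * a * k) := by
      rw [h1]; rw [mul_assoc, ← Real.exp_add]; simp
    have h4 : 8 * (k / B) / 3 < 2 * a * k := by
      have : 4 / 3 * k < a * B * k := by
        apply mul_lt_mul_of_pos_right hab hk0
      calc 8 * (k / B) / 3 = (4 / 3 * k) * (2 / B) := by ring
        _ < (a * B * k) * (2 / B) := by
            apply mul_lt_mul_of_pos_right this (by positivity)
        _ = 2 * a * k := by field_simp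
    have h5 : Real.exp (8 * (k / B) / 3) < Real.exp (2 * a * k) :=
      Real.exp_lt_exp.mpr h4
    nlinarith [h2, h3, h5, hs]
  -- main bound
  have hmain : B - k ≤ 2 * B * Real.exp (-a * B) := by
    rw [h1]
    have he : Real.exp (-(2 * a * k)) ≤ Real.exp (-a * B) := by
      apply Real.exp_le_exp.mpr
      nlinarith
    calc (B + k) * Real.exp (-(2 * a * k)) ≤ (2 * B) * Real.exp (-(2 * a * k)) := by
          apply mul_le_mul_of_nonneg_right (by linarith) (Real.exp_pos _).le
      _ ≤ 2 * B * Real.exp (-a * B) := by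
          apply mul_le_mul_of_nonneg_left he (by linarith)
  exact ⟨⟨by linarith, hkB.le⟩, ⟨hs.le, hmain⟩⟩
end

section
/- Let a > 0, B > 0, k > 0 with k ≠ B, and suppose there exists a nonzero function φ ∈ C²([0,a]) satisfying φ''(u) = k²·φ(u) for all u ∈ [0,a], φ'(0) = -B·φ(0), and φ(a) = 0. Then exp(2*k*a) = (B + k)/(B - k); equivalently, if moreover 0 < k < B, then 2*a*k + log(B - k) - log(B + k) = 0. -/
/-!
For `c = ±k`, the quantity `(φ' - c φ) e^{c u}` (the Wronskian of `e^{c u}` and `φ`) is constant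
along solutions of `φ'' = k² φ`. Evaluating both invariants at `0` with the Robin condition and at
`a` with the Dirichlet condition gives `φ'(a) e^{k a} = -(B + k) φ(0)` and
`φ'(a) e^{-k a} = -(B - k) φ(0)`; dividing, `(B - k) e^{2 k a} = B + k` as soon as `φ(0) ≠ 0`.
If `φ(0) = 0`, then `φ'(0) = 0` too, both invariants vanish, and `φ' = k φ = -k φ` forces `φ ≡ 0`.
-/

open Real Set

variable {f : ℝ → ℝ} {a b c k : ℝ}

lemma hasDerivAt_deriv_sub_mul_mul_exp {x : ℝ} (hf : DifferentiableAt ℝ f x)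
    (hf' : DifferentiableAt ℝ (deriv f) x) :
    HasDerivAt (fun y => (deriv f y - c * f y) * exp (c * y))
      ((deriv (deriv f) x - c ^ 2 * f x) * exp (c * x)) x := by
  have hexp : HasDerivAt (fun y => exp (c * y)) (exp (c * x) * c) x := by
    simpa using ((hasDerivAt_id x).const_mul c).exp
  exact ((hf'.hasDerivAt.sub (hf.hasDerivAt.const_mul c)).mul hexp).congr_deriv (by simp only [Pi.sub_apply]; ring)

lemma deriv_sub_mul_mul_exp_eq_of_deriv_deriv_eq (hf : ContDiff ℝ 2 f)
    (hode : ∀ x ∈ Icc a b, deriv (deriv f) x = c ^ 2 * f x) :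
    ∀ x ∈ Icc a b, (deriv f x - c * f x) * exp (c * x) = (deriv f a - c * f a) * exp (c * a) := by
  have hf1 : Differentiable ℝ f := hf.differentiable (by norm_num)
  have hf2 : Differentiable ℝ (deriv f) :=
    (contDiff_succ_iff_deriv.mp (hf : ContDiff ℝ (1 + 1) f)).2.2.differentiable one_ne_zero
  have hzero : ∀ x ∈ Icc a b, HasDerivAt (fun y => (deriv f y - c * f y) * exp (c * y)) 0 x := by
    intro x hx
    simpa [hode x hx] using hasDerivAt_deriv_sub_mul_mul_exp (c := c) (hf1 x) (hf2 x)
  exact constant_of_has_deriv_right_zero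
    (fun x hx => (hzero x hx).continuousAt.continuousWithinAt)
    (fun x hx => (hzero x (Ico_subset_Icc_self hx)).hasDerivWithinAt)

lemma eq_zero_of_deriv_deriv_eq_sq_mul (hf : ContDiff ℝ 2 f) (hk : k ≠ 0)
    (hode : ∀ x ∈ Icc a b, deriv (deriv f) x = k ^ 2 * f x) (h₀ : f a = 0) (h₀' : deriv f a = 0) :
    ∀ x ∈ Icc a b, f x = 0 := by
  intro x hx
  have hode' : ∀ x ∈ Icc a b, deriv (deriv f) x = (-k) ^ 2 * f x := by
    simpa only [neg_sq] using hode
  have hplus := deriv_sub_mul_mul_exp_eq_of_deriv_deriv_eq hf hode x hx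
  have hminus := deriv_sub_mul_mul_exp_eq_of_deriv_deriv_eq hf hode' x hx
  simp only [h₀, h₀', mul_zero, sub_zero, zero_mul, mul_eq_zero, exp_ne_zero, or_false]
    at hplus hminus
  have h2k : 2 * k * f x = 0 := by linear_combination hminus - hplus
  simpa [hk] using h2k

theorem robin_dirichlet_spectral_condition_general (a B k : ℝ)
    (hk : 0 < k) (hkB : k ≠ B) (φ : ℝ → ℝ) (hφ : ContDiff ℝ 2 φ)
    (hne : ∃ u ∈ Set.Icc 0 a, φ u ≠ 0)
    (hode : ∀ u ∈ Set.Icc 0 a, deriv (deriv φ) u = k ^ 2 * φ u)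
    (hbc0 : deriv φ 0 = -B * φ 0) (hbca : φ a = 0) :
    Real.exp (2 * k * a) = (B + k) / (B - k) ∧
    (k < B → 2 * a * k + Real.log (B - k) - Real.log (B + k) = 0) := by
  obtain ⟨u, hu, hφu⟩ := hne
  have hφ0 : φ 0 ≠ 0 := fun h₀ => hφu <|
    eq_zero_of_deriv_deriv_eq_sq_mul hφ hk.ne' hode h₀ (by rw [hbc0, h₀, mul_zero]) u hu
  have ha_mem : a ∈ Icc 0 a := ⟨hu.1.trans hu.2, le_rfl⟩
  have hplus := deriv_sub_mul_mul_exp_eq_of_deriv_deriv_eq hφ hode a ha_mem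
  have hminus := deriv_sub_mul_mul_exp_eq_of_deriv_deriv_eq (c := -k) hφ
    (by simpa only [neg_sq] using hode) a ha_mem
  simp only [hbca, hbc0, mul_zero, sub_zero, exp_zero, mul_one] at hplus hminus
  have hexp : exp (k * a) * exp (-k * a) = 1 := by rw [← exp_add]; simp
  have hexp2 : exp (k * a) * exp (k * a) = exp (2 * k * a) := by rw [← exp_add]; ring_nf
  have key : (B - k) * exp (2 * k * a) = B + k := by
    refine mul_right_cancel₀ hφ0 ?_
    linear_combination exp (k * a) * exp (k * a) * hminus - hplus
      - (B - k) * φ 0 * hexp2 - deriv φ a * exp (k * a) * hexp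
  have hBk : B - k ≠ 0 := sub_ne_zero.2 hkB.symm
  refine ⟨by rw [eq_div_iff hBk, ← key, mul_comm], fun hlt => ?_⟩
  have hlog := congrArg log key
  rw [log_mul (sub_pos.2 hlt).ne' (exp_pos _).ne', log_exp] at hlog
  linarith

theorem robin_dirichlet_spectral_condition (a B k : ℝ) (ha : 0 < a) (hB : 0 < B)
    (hk : 0 < k) (hkB : k ≠ B) (φ : ℝ → ℝ) (hφ : ContDiff ℝ 2 φ)
    (hne : ∃ u ∈ Set.Icc 0 a, φ u ≠ 0)
    (hode : ∀ u ∈ Set.Icc 0 a, deriv (deriv φ) u = k ^ 2 * φ u)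
    (hbc0 : deriv φ 0 = -B * φ 0) (hbca : φ a = 0) :
    Real.exp (2 * k * a) = (B + k) / (B - k) ∧
    (k < B → 2 * a * k + Real.log (B - k) - Real.log (B + k) = 0) :=
  robin_dirichlet_spectral_condition_general a B k hk hkB φ hφ hne hode hbc0 hbca
end

section
/- Let a > 0, B > 0 and 0 ≤ c < B, and assume B > (2·log 5)/(3·a). If k > B satisfies exp(2*k*a) = ((k + B)/(k - B)) · ((k + c)/(k - c)), then k < (3/2)·B. -/
theorem robin_neumann_solution_upper_bound (a B c k : ℝ) (ha : 0 < a) (hB : 0 < B)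
    (hc : 0 ≤ c) (hcB : c < B) (hBbig : 2 * Real.log 5 / (3 * a) < B) (hk : B < k)
    (heq : Real.exp (2 * k * a) = ((k + B) / (k - B)) * ((k + c) / (k - c))) :
    k < 3 / 2 * B := by
  by_contra h
  push_neg at h
  have hkB : (0:ℝ) < k - B := by linarith
  have hkc : (0:ℝ) < k - c := by linarith
  have h1 : (k + B) / (k - B) ≤ 5 := by
    rw [div_le_iff₀ hkB]; linarith
  have h2 : (k + c) / (k - c) ≤ 5 := by
    rw [div_le_iff₀ hkc]; linarith
  have hpos2 : 0 ≤ (k + c) / (k - c) := div_nonneg (by linarith) hkc.le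
  have hrhs : ((k + B) / (k - B)) * ((k + c) / (k - c)) ≤ 25 := by
    calc ((k + B) / (k - B)) * ((k + c) / (k - c)) ≤ 5 * 5 :=
          mul_le_mul h1 h2 hpos2 (by norm_num)
      _ = 25 := by norm_num
  have hlog : Real.log 25 < 2 * k * a := by
    have : Real.log 25 = 2 * Real.log 5 := by
      rw [show (25:ℝ) = 5 ^ 2 by norm_num, Real.log_pow]; ring
    rw [this]
    have h3aB : 2 * Real.log 5 < 3 * a * B := by
      rw [div_lt_iff₀ (by positivity)] at hBbig; linarith
    nlinarith
  have : (25:ℝ) < Real.exp (2 * k * a) := by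
    calc (25:ℝ) = Real.exp (Real.log 25) := (Real.exp_log (by norm_num)).symm
      _ < Real.exp (2 * k * a) := Real.exp_lt_exp.mpr hlog
  linarith [heq ▸ this]
end

section
/- Let a > 0, B > 0 and 0 ≤ c < B, with B > (2·log 5)/(3·a). If k > B satisfies exp(2*k*a) = ((k + B)/(k - B)) · ((k + c)/(k - c)), then writing s = k - B one has 0 < s ≤ (5/2)·B·exp(-a·B). Consequently B² ≤ k² ≤ B² + (45/4)·B²·exp(-a·B). -/
theorem robin_neumann_eigenvalue_bound (a B c k : ℝ) (ha : 0 < a) (hB : 0 < B)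
    (hc : 0 ≤ c) (hcB : c < B) (hBbig : 2 * Real.log 5 / (3 * a) < B) (hk : B < k)
    (heq : Real.exp (2 * k * a) = ((k + B) / (k - B)) * ((k + c) / (k - c))) :
    (0 < k - B ∧ k - B ≤ 5 / 2 * B * Real.exp (-a * B)) ∧
    (B ^ 2 ≤ k ^ 2 ∧ k ^ 2 ≤ B ^ 2 + 45 / 4 * B ^ 2 * Real.exp (-a * B)) := by
  have hs : 0 < k - B := by linarith
  have hkc : 0 < k - c := by linarith
  have h3a : (0:ℝ) < 3 * a := by linarith
  have hlog : 2 * Real.log 5 < 3 * a * B := by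
    have := mul_lt_mul_of_pos_right hBbig h3a
    rw [div_mul_cancel₀] at this
    · linarith
    · positivity
  have hratio : Real.exp (2 * k * a) ≤ ((k + B) / (k - B)) ^ 2 := by
    rw [heq, sq]
    have h1 : (k + c) / (k - c) ≤ (k + B) / (k - B) := by
      rw [div_le_div_iff₀ hkc hs]; nlinarith
    have h2 : 0 ≤ (k + B) / (k - B) := by
      apply div_nonneg <;> linarith
    exact mul_le_mul_of_nonneg_left h1 h2
  have hk32 : k < 3 / 2 * B := by
    by_contra h
    push_neg at h
    have h5 : (k + B) / (k - B) ≤ 5 := by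
      rw [div_le_iff₀ hs]; linarith
    have h25 : Real.exp (2 * k * a) ≤ 25 := by
      calc Real.exp (2 * k * a) ≤ ((k + B) / (k - B)) ^ 2 := hratio
        _ ≤ 5 ^ 2 := by apply pow_le_pow_left₀ (div_nonneg (by linarith) hs.le) h5
        _ = 25 := by norm_num
    have hgt : (25:ℝ) < Real.exp (2 * k * a) := by
      have hexp : Real.exp (2 * Real.log 5) < Real.exp (2 * k * a) := by
        apply Real.exp_lt_exp.mpr
        nlinarith
      have h25e : Real.exp (2 * Real.log 5) = 25 := by
        rw [two_mul, Real.exp_add, Real.exp_log (by norm_num : (0:ℝ) < 5)]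
        norm_num
      linarith
    linarith
  have hexpka : Real.exp (k * a) ≤ 5 / 2 * B / (k - B) := by
    have hX : (0:ℝ) < 5 / 2 * B / (k - B) := by positivity
    have hsq : Real.exp (k * a) ^ 2 ≤ (5 / 2 * B / (k - B)) ^ 2 := by
      have he2 : Real.exp (k * a) ^ 2 = Real.exp (2 * k * a) := by
        rw [sq, ← Real.exp_add]; ring_nf
      rw [he2]
      calc Real.exp (2 * k * a) ≤ ((k + B) / (k - B)) ^ 2 := hratio
        _ ≤ (5 / 2 * B / (k - B)) ^ 2 := by
            gcongr
            · exact div_nonneg (by linarith) hs.le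
            · linarith
    nlinarith [Real.exp_pos (k * a), hX, hsq]
  have hsle : k - B ≤ 5 / 2 * B * Real.exp (-(k * a)) := by
    rw [Real.exp_neg, ← div_eq_mul_inv, le_div_iff₀ (Real.exp_pos _)]
    nlinarith [(le_div_iff₀ hs).mp hexpka, Real.exp_pos (k * a)]
  have hmono : Real.exp (-(k * a)) ≤ Real.exp (-a * B) := by
    apply Real.exp_le_exp.mpr
    nlinarith
  have hE0 : 0 < Real.exp (-a * B) := Real.exp_pos _
  have hE1 : Real.exp (-a * B) < 1 := by
    apply Real.exp_lt_one_iff.mpr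
    nlinarith
  have hfin : k - B ≤ 5 / 2 * B * Real.exp (-a * B) := by
    calc k - B ≤ 5 / 2 * B * Real.exp (-(k * a)) := hsle
      _ ≤ 5 / 2 * B * Real.exp (-a * B) := by gcongr
  refine ⟨⟨hs, hfin⟩, ?_, ?_⟩
  · nlinarith
  · nlinarith [mul_le_mul hfin hfin hs.le (by positivity : (0:ℝ) ≤ 5 / 2 * B * Real.exp (-a * B)),
      mul_pos hB hE0, sq_nonneg (Real.exp (-a * B))]
end
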